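/- Let λ > 0, ρ ∈ ℂ, ψ, φ ∈ (0, π), and x ∈ ℝ. Then e^ρ · ₁F₁(λ+ix; 2λ; (e^{−2iφ}−1)ρ) = exp(ρ e^{−iφ} sin(ψ−φ)/sin ψ) · Σ_{k=0}^∞ (sin φ/sin ψ)^k · [P_k^{(λ)}(x; ψ)/((2λ)_k e^{ikφ})] ρ^k, where both sides are entire functions of ρ and the series converges absolutely for all ρ ∈ ℂ. -/

import Mathlib

open Complex Finset

/-- The Pochhammer symbol (rising factorial) `(z)_n = z(z+1)⋯(z+n-1)`. -/
noncomputable def poch (z : ℂ) (n : ℕ) : ℂ := ∏ i ∈ Finset.range n, (z + i)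

/-- The Meixner–Pollaczek polynomial `P_n^{(λ)}(x; φ)` via its terminating
`₂F₁(-n, λ+ix; 2λ; 1-e^{-2iφ})` representation. -/
noncomputable def MP (n : ℕ) (lam : ℝ) (x : ℝ) (phi : ℝ) : ℂ :=
  poch ((2 * lam : ℝ) : ℂ) n / (n.factorial : ℂ) * Complex.exp (Complex.I * n * phi) *
    ∑ k ∈ Finset.range (n + 1),
      poch (-(n : ℂ)) k * poch ((lam : ℂ) + Complex.I * x) k /
          (poch ((2 * lam : ℝ) : ℂ) k * k.factorial) *
        (1 - Complex.exp (-2 * Complex.I * phi)) ^ k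

/-- The confluent hypergeometric function `₁F₁(a; b; z)`. -/
noncomputable def F11 (a b z : ℂ) : ℂ :=
  ∑' n : ℕ, poch a n * z ^ n / (poch b n * n.factorial)

/-! Multiplying the exponential series by the `₁F₁` series gives, through the Cauchy product
and `(-k)_j (-1)^j = k! / (k-j)!`, the classical generating function
`e^t ₁F₁(a; b; -z t) = ∑ₖ ₂F₁(-k, a; b; z) tᵏ / k!`. For `z = 1 - e^{-2iψ}` its coefficients
are the normalised Meixner–Pollaczek polynomials `P_k^{(λ)}(x; ψ) / ((2λ)_k e^{ikψ})`. Taking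
`t = ρ e^{i(ψ-φ)} sin φ / sin ψ` turns `-z t` into `(e^{-2iφ} - 1) ρ`, and the identity
`e^{-iφ} sin(ψ-φ) + e^{i(ψ-φ)} sin φ = sin ψ` splits `e^ρ` as
`e^{ρ e^{-iφ} sin(ψ-φ) / sin ψ} e^t`. -/

/-- `₂F₁(-n, a; b; z)`, which terminates and is a polynomial in `z`. -/
noncomputable def F21Poly (n : ℕ) (a b z : ℂ) : ℂ :=
  ∑ j ∈ range (n + 1), poch (-(n : ℂ)) j * poch a j / (poch b j * j.factorial) * z ^ j

theorem poch_neg_natCast_mul_factorial {j k : ℕ} (hjk : j ≤ k) :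
    poch (-(k : ℂ)) j * (k - j).factorial = (-1) ^ j * k.factorial := by
  have hpoch : poch (-(k : ℂ)) j = (-1) ^ j * k.descFactorial j := by
    calc poch (-(k : ℂ)) j = ∏ i ∈ range j, (-1) * ((k : ℂ) - i) :=
          prod_congr rfl fun i _ => by ring
      _ = (-1) ^ j * k.descFactorial j := by
          rw [prod_mul_distrib, prod_const, card_range, ← descPochhammer_eval_eq_prod_range,
            descPochhammer_eval_eq_descFactorial]
  rw [hpoch, ← Nat.factorial_mul_descFactorial hjk]
  push_cast
  ring

theorem poch_ofReal_ne_zero {b : ℝ} (hb : 0 < b) (n : ℕ) : poch (b : ℂ) n ≠ 0 :=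
  prod_ne_zero_iff.mpr fun i _ => by
    rw [← ofReal_natCast, ← ofReal_add, ofReal_ne_zero]
    positivity

theorem norm_poch_le {b : ℝ} (hb : 0 < b) (a : ℂ) (n : ℕ) :
    ‖poch a n‖ ≤ max (‖a‖ / b) 1 ^ n * ‖poch (b : ℂ) n‖ := by
  rw [poch, poch, norm_prod, norm_prod]
  nth_rw 2 [← card_range n]
  rw [pow_card_mul_prod]
  refine prod_le_prod (fun _ _ => norm_nonneg _) fun i _ => ?_
  have hbi : ‖(b : ℂ) + i‖ = b + i := by
    rw [← ofReal_natCast, ← ofReal_add, norm_real, Real.norm_of_nonneg (by positivity)]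
  have hab : ‖a‖ ≤ max (‖a‖ / b) 1 * b := (div_le_iff₀ hb).mp (le_max_left _ _)
  have hi : (i : ℝ) ≤ max (‖a‖ / b) 1 * i :=
    le_mul_of_one_le_left (Nat.cast_nonneg i) (le_max_right _ _)
  calc ‖a + i‖ ≤ ‖a‖ + i := by simpa using norm_add_le a i
    _ ≤ max (‖a‖ / b) 1 * ‖(b : ℂ) + i‖ := by rw [hbi]; linarith

theorem summable_norm_F11_term {b : ℝ} (hb : 0 < b) (a z : ℂ) :
    Summable fun n : ℕ => ‖poch a n * z ^ n / (poch (b : ℂ) n * n.factorial)‖ := by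
  set M := max (‖a‖ / b) 1
  refine (Real.summable_pow_div_factorial (M * ‖z‖)).of_nonneg_of_le (fun _ => norm_nonneg _)
    fun n => ?_
  have hpos : 0 < ‖poch (b : ℂ) n‖ := norm_pos_iff.mpr (poch_ofReal_ne_zero hb n)
  rw [norm_div, norm_mul, norm_mul, norm_pow, norm_natCast, mul_pow,
    div_le_div_iff₀ (by positivity) (by positivity)]
  calc ‖poch a n‖ * ‖z‖ ^ n * n.factorial
      ≤ M ^ n * ‖poch (b : ℂ) n‖ * ‖z‖ ^ n * n.factorial := by
        gcongr; exact norm_poch_le hb a n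
    _ = M ^ n * ‖z‖ ^ n * (‖poch (b : ℂ) n‖ * n.factorial) := by ring

theorem sum_F11_term_mul_exp_term (a b z t : ℂ) (k : ℕ) :
    ∑ j ∈ range (k + 1), poch a j * (-(z * t)) ^ j / (poch b j * j.factorial) *
        (t ^ (k - j) / (k - j).factorial) =
      F21Poly k a b z * t ^ k / k.factorial := by
  rw [F21Poly, sum_mul, sum_div]
  refine sum_congr rfl fun j hj => ?_
  have hjk : j ≤ k := Nat.lt_succ_iff.mp (mem_range.mp hj)
  have hpoch : poch (-(k : ℂ)) j / k.factorial = (-1) ^ j / (k - j).factorial := by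
    rw [div_eq_div_iff (Nat.cast_ne_zero.mpr k.factorial_ne_zero)
      (Nat.cast_ne_zero.mpr (k - j).factorial_ne_zero), poch_neg_natCast_mul_factorial hjk]
  have htk : t ^ j * t ^ (k - j) = t ^ k := by rw [← pow_add, Nat.add_sub_cancel' hjk]
  calc _ = poch a j / (poch b j * j.factorial) *
        ((-1) ^ j / (k - j).factorial * z ^ j * (t ^ j * t ^ (k - j))) := by ring
    _ = _ := by rw [← hpoch, htk]; ring

theorem exp_mul_F11_eq_tsum_F21Poly {b : ℝ} (hb : 0 < b) (a z t : ℂ) :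
    Summable (fun k : ℕ => ‖F21Poly k a b z * t ^ k / k.factorial‖) ∧
      exp t * F11 a b (-(z * t)) = ∑' k : ℕ, F21Poly k a b z * t ^ k / k.factorial := by
  have hF := summable_norm_F11_term hb a (-(z * t))
  have hexp := NormedSpace.norm_expSeries_div_summable t
  have hcoeff := sum_F11_term_mul_exp_term a b z t
  refine ⟨?_, ?_⟩
  · simpa only [hcoeff] using summable_norm_sum_mul_range_of_summable_norm hF hexp
  · rw [exp_eq_exp_ℂ, ← (NormedSpace.expSeries_div_hasSum_exp t).tsum_eq, mul_comm, F11,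
      tsum_mul_tsum_eq_tsum_sum_range_of_summable_norm hF hexp]
    exact tsum_congr hcoeff

namespace Complex

theorem exp_neg_two_mul_I_sub_one (θ : ℂ) :
    exp (-2 * I * θ) - 1 = -2 * I * sin θ * exp (-I * θ) := by
  have hw : exp (-I * θ) ≠ 0 := exp_ne_zero _
  rw [sin, show -θ * I = -I * θ by ring, show θ * I = -(-I * θ) by ring, exp_neg,
    show -2 * I * θ = -I * θ + -I * θ by ring, exp_add]
  generalize exp (-I * θ) = w at hw ⊢
  field_simp
  linear_combination (w ^ 2 - 1) * I_sq

theorem exp_neg_mul_sin_add_exp_mul_sin (α β : ℂ) :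
    exp (-I * β) * sin α + exp (I * α) * sin β = sin (α + β) := by
  rw [sin_add, show -I * β = -β * I by ring, show I * α = α * I by ring, exp_mul_I, exp_mul_I,
    cos_neg, sin_neg]
  ring

theorem one_sub_exp_neg_two_mul_I_mul_eq {ψ : ℂ} (hψ : sin ψ ≠ 0) (φ ρ : ℂ) :
    (1 - exp (-2 * I * ψ)) * (ρ * exp (I * (ψ - φ)) * sin φ / sin ψ) =
      (1 - exp (-2 * I * φ)) * ρ := by
  have hrot : exp (-I * ψ) * exp (I * (ψ - φ)) = exp (-I * φ) := by
    rw [← exp_add]; ring_nf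
  rw [← neg_sub (exp (-2 * I * ψ)), ← neg_sub (exp (-2 * I * φ)), exp_neg_two_mul_I_sub_one,
    exp_neg_two_mul_I_sub_one, ← hrot]
  field_simp

end Complex

theorem MP_div_poch_mul_exp {lam : ℝ} (hlam : 0 < lam) (k : ℕ) (x psi phi : ℝ) :
    MP k lam x psi / (poch ((2 * lam : ℝ) : ℂ) k * exp (I * k * phi)) =
      F21Poly k (lam + I * x) ((2 * lam : ℝ) : ℂ) (1 - exp (-2 * I * psi)) / k.factorial *
        exp (I * (psi - phi)) ^ k := by
  have hpoch := poch_ofReal_ne_zero (by positivity : 0 < 2 * lam) k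
  have hexp : exp (I * k * psi) = exp (I * (psi - phi)) ^ k * exp (I * k * phi) := by
    rw [← exp_nat_mul, ← exp_add]; ring_nf
  rw [MP, ← F21Poly, hexp]
  field_simp

theorem MP_gen_gf_exp_general (lam : ℝ) (hlam : 0 < lam) (ρ : ℂ) (psi phi : ℝ)
    (hpsi : psi ∈ Set.Ioo 0 Real.pi) (x : ℝ) :
    Summable (fun k : ℕ => ‖((Real.sin phi : ℂ) ^ k / (Real.sin psi : ℂ) ^ k) *
        (MP k lam x psi / (poch ((2 * lam : ℝ) : ℂ) k *
          Complex.exp (Complex.I * k * phi))) * ρ ^ k‖) ∧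
      Complex.exp ρ *
          F11 ((lam : ℂ) + Complex.I * x) ((2 * lam : ℝ) : ℂ)
            ((Complex.exp (-2 * Complex.I * phi) - 1) * ρ) =
        Complex.exp (ρ * Complex.exp (-Complex.I * phi) *
            Real.sin (psi - phi) / Real.sin psi) *
          ∑' k : ℕ, ((Real.sin phi : ℂ) ^ k / (Real.sin psi : ℂ) ^ k) *
            (MP k lam x psi / (poch ((2 * lam : ℝ) : ℂ) k *
              Complex.exp (Complex.I * k * phi))) * ρ ^ k := by
  have hsin : sin (psi : ℂ) ≠ 0 := by
    exact_mod_cast (Real.sin_pos_of_pos_of_lt_pi hpsi.1 hpsi.2).ne'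
  simp only [ofReal_sin, ofReal_sub]
  have harg := one_sub_exp_neg_two_mul_I_mul_eq hsin phi ρ
  set σ := ρ * exp (I * (psi - phi)) * sin phi / sin psi
  have hterm : ∀ k : ℕ, sin (phi : ℂ) ^ k / sin (psi : ℂ) ^ k *
      (MP k lam x psi / (poch ((2 * lam : ℝ) : ℂ) k * exp (I * k * phi))) * ρ ^ k =
      F21Poly k (lam + I * x) ((2 * lam : ℝ) : ℂ) (1 - exp (-2 * I * psi)) * σ ^ k /
        k.factorial := fun k => by
    rw [MP_div_poch_mul_exp hlam]; ring
  have hsplit : ρ * exp (-I * phi) * sin (psi - phi) / sin psi + σ = ρ := by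
    have hsin_add := exp_neg_mul_sin_add_exp_mul_sin (psi - phi) phi
    rw [sub_add_cancel] at hsin_add
    calc _ = ρ * (exp (-I * phi) * sin (psi - phi) + exp (I * (psi - phi)) * sin phi) /
          sin psi := by ring
      _ = ρ := by rw [hsin_add, mul_div_cancel_right₀ _ hsin]
  obtain ⟨hsum, heq⟩ := exp_mul_F11_eq_tsum_F21Poly (by positivity : 0 < 2 * lam) (lam + I * x)
    (1 - exp (-2 * I * psi)) σ
  rw [harg, ← neg_mul, neg_sub] at heq
  refine ⟨by simpa only [hterm] using hsum, ?_⟩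
  rw [tsum_congr hterm, ← heq, ← mul_assoc, ← exp_add, hsplit]

theorem MP_gen_gf_exp (lam : ℝ) (hlam : 0 < lam) (ρ : ℂ) (psi phi : ℝ)
    (hpsi : psi ∈ Set.Ioo 0 Real.pi) (hphi : phi ∈ Set.Ioo 0 Real.pi) (x : ℝ) :
    Summable (fun k : ℕ => ‖((Real.sin phi : ℂ) ^ k / (Real.sin psi : ℂ) ^ k) *
        (MP k lam x psi / (poch ((2 * lam : ℝ) : ℂ) k *
          Complex.exp (Complex.I * k * phi))) * ρ ^ k‖) ∧
      Complex.exp ρ *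
          F11 ((lam : ℂ) + Complex.I * x) ((2 * lam : ℝ) : ℂ)
            ((Complex.exp (-2 * Complex.I * phi) - 1) * ρ) =
        Complex.exp (ρ * Complex.exp (-Complex.I * phi) *
            Real.sin (psi - phi) / Real.sin psi) *
          ∑' k : ℕ, ((Real.sin phi : ℂ) ^ k / (Real.sin psi : ℂ) ^ k) *
            (MP k lam x psi / (poch ((2 * lam : ℝ) : ℂ) k *
              Complex.exp (Complex.I * k * phi))) * ρ ^ k :=
  MP_gen_gf_exp_general lam hlam ρ psi phi hpsi x
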